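/- arXiv:2502.14392 — 2 statements merged into one kernel-verified Lean document; each statement's English description precedes it below -/
import Mathlib

section
/- Every minimally rigid ℤ²⋊Cs-gain graph is ℤ²⋊Cs-tight. -/
/-!
Rank counting against trivial motions. Orbit matrices at two generic configurations have equal
rank, so rigidity and independence of the rows give `|E| = 2|V| - 1`. For a subgraph `H`, the rows of its edges are
independent, supported on the columns of `H`, and orthogonal to every infinitesimal motion that
is trivial on `H`; hence `|E(H)| ≤ 2|V(H)| - l` once there are `l` such motions that stay
independent on the columns of `H`. The horizontal translation is trivial for every gain graph.
On a purely periodic `H` a switching potential `s` with `(m e).r = s(fst e) xor s(snd e)` makes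
the vertical translation, reflected at the vertices with `s v = true`, trivial as well. On a
balanced `H` a potential `g` with `m e = (g (fst e))⁻¹ * g (snd e)` lifts `H` to an ordinary
framework `v ↦ g v · p v`, whose rotation pulls back to a third trivial motion. It is independent
of the translations because the ends of an edge have distinct lifted positions: otherwise the row
of that edge would vanish.
-/

namespace Crystal

/-- The wallpaper group `pm = ℤ² ⋊ 𝒞ₛ`.  An element is a pair of a translation
vector `t ∈ ℤ²` and a Boolean `r` recording the `𝒞ₛ`-component
(`true` = the reflection `s` in the x-axis). -/
@[ext] structure PM : Type where
  t : ℤ × ℤ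
  r : Bool

namespace PM

/-- The action of the reflection component on translation vectors. -/
def act (σ : Bool) (z : ℤ × ℤ) : ℤ × ℤ := (z.1, if σ then -z.2 else z.2)

instance : Mul PM := ⟨fun a b => ⟨a.t + act a.r b.t, xor a.r b.r⟩⟩
instance : One PM := ⟨⟨0, false⟩⟩
instance : Inv PM := ⟨fun a => ⟨act a.r (-a.t), a.r⟩⟩

lemma mul_def (a b : PM) : a * b = ⟨a.t + act a.r b.t, xor a.r b.r⟩ := rfl
lemma one_def : (1 : PM) = ⟨0, false⟩ := rfl
lemma inv_def (a : PM) : a⁻¹ = ⟨act a.r (-a.t), a.r⟩ := rfl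

instance : Group PM where
  mul_assoc a b c := by
    obtain ⟨⟨x1, x2⟩, ra⟩ := a
    obtain ⟨⟨y1, y2⟩, rb⟩ := b
    obtain ⟨⟨z1, z2⟩, rc⟩ := c
    cases ra <;> cases rb <;> cases rc <;>
      simp [mul_def, act, Prod.ext_iff] <;> omega
  one_mul a := by
    obtain ⟨⟨x1, x2⟩, ra⟩ := a
    cases ra <;> simp [mul_def, one_def, act]
  mul_one a := by
    obtain ⟨⟨x1, x2⟩, ra⟩ := a
    cases ra <;> simp [mul_def, one_def, act]
  inv_mul_cancel a := by
    obtain ⟨⟨x1, x2⟩, ra⟩ := a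
    cases ra <;> simp [mul_def, one_def, inv_def, act, Prod.ext_iff]

/-- The affine action of `pm` on the plane: `(z,σ)·x = σ(x) + z`. -/
noncomputable def toPlane (g : PM) (x : ℝ × ℝ) : ℝ × ℝ :=
  (x.1 + (g.t.1 : ℝ), (if g.r then -x.2 else x.2) + (g.t.2 : ℝ))

end PM

/-- A multigraph: a finite vertex set, a finite edge set, and two endpoint maps
(which also fix a reference orientation of every edge, from `fst` to `snd`).
Loops and parallel edges are allowed. -/
structure Multigraph (α β : Type) where
  verts : Finset α
  edges : Finset β
  fst : β → α
  snd : β → α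
  fst_mem : ∀ e ∈ edges, fst e ∈ verts
  snd_mem : ∀ e ∈ edges, snd e ∈ verts

variable {α β : Type}

/-- `H` is a subgraph of `G`. -/
def IsSubgraph (H G : Multigraph α β) : Prop :=
  H.verts ⊆ G.verts ∧ H.edges ⊆ G.edges ∧
    ∀ e ∈ H.edges, H.fst e = G.fst e ∧ H.snd e = G.snd e

/-- `(k,l)`-sparsity. -/
def Sparse (k l : ℕ) (G : Multigraph α β) : Prop :=
  ∀ H : Multigraph α β, IsSubgraph H G → 1 ≤ H.edges.card →
    (H.edges.card : ℤ) ≤ k * H.verts.card - l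

/-- `(k,l)`-tightness. -/
def Tight (k l : ℕ) (G : Multigraph α β) : Prop :=
  Sparse k l G ∧ (G.edges.card : ℤ) = k * G.verts.card - l

/-- The degree of a vertex: the number of edge-incidences, loops counting twice. -/
def Multigraph.degree [DecidableEq α] (G : Multigraph α β) (v : α) : ℕ :=
  ∑ e ∈ G.edges, ((if G.fst e = v then 1 else 0) + (if G.snd e = v then 1 else 0))

/-- The starting vertex of a step `(e, dir)` of a walk: `dir = true` means the
edge is traversed forwards. -/
def stepHead (G : Multigraph α β) (s : β × Bool) : α := if s.2 then G.fst s.1 else G.snd s.1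

/-- The final vertex of a step of a walk. -/
def stepTail (G : Multigraph α β) (s : β × Bool) : α := if s.2 then G.snd s.1 else G.fst s.1

/-- `IsWalk G u v L` : `L` is a walk in `G` from `u` to `v`. -/
def IsWalk (G : Multigraph α β) : α → α → List (β × Bool) → Prop
  | u, v, [] => u = v
  | u, v, s :: L => s.1 ∈ G.edges ∧ stepHead G s = u ∧ IsWalk G (stepTail G s) v L

/-- The net gain of a walk. -/
def walkGain (m : β → PM) (L : List (β × Bool)) : PM :=
  (L.map fun s => if s.2 then m s.1 else (m s.1)⁻¹).prod

/-- A gain graph is balanced if every closed walk has identity net gain. -/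
def Balanced (G : Multigraph α β) (m : β → PM) : Prop :=
  ∀ u L, IsWalk G u u L → walkGain m L = 1

/-- A gain graph is purely periodic if every closed walk has net gain in the
translation subgroup `ℤ²`. -/
def PurelyPeriodic (G : Multigraph α β) (m : β → PM) : Prop :=
  ∀ u L, IsWalk G u u L → (walkGain m L).r = false

/-- A multigraph is connected if every pair of its vertices is joined by a walk. -/
def Connected (G : Multigraph α β) : Prop :=
  ∀ u ∈ G.verts, ∀ v ∈ G.verts, ∃ L, IsWalk G u v L

/-- The conditions for `m` to be a gain assignment on `G`: parallel edges with the
same orientation get distinct gains, and loops get non-identity gains. -/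
structure IsGainGraph (G : Multigraph α β) (m : β → PM) : Prop where
  parallel_ne : ∀ e ∈ G.edges, ∀ f ∈ G.edges,
    e ≠ f → G.fst e = G.fst f → G.snd e = G.snd f → m e ≠ m f
  loop_ne_one : ∀ e ∈ G.edges, G.fst e = G.snd e → m e ≠ 1

/-- `ℤ²⋊𝒞ₛ`-tightness of a gain graph. -/
def PMTight (G : Multigraph α β) (m : β → PM) : Prop :=
  Tight 2 1 G ∧
    (∀ H : Multigraph α β, IsSubgraph H G → PurelyPeriodic H m → Sparse 2 2 H) ∧
    (∀ H : Multigraph α β, IsSubgraph H G → Balanced H m → Sparse 2 3 H)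

/-- The orbit rigidity matrix of a `ℤ²⋊𝒞ₛ`-gain framework. -/
noncomputable def orbitMatrix [DecidableEq α] (G : Multigraph α β) (m : β → PM)
    (p : α → ℝ × ℝ) :
    Matrix {e : β // e ∈ G.edges} ({v : α // v ∈ G.verts} × Fin 2) ℝ :=
  fun er vc =>
    let e : β := er.1
    let i : α := G.fst e
    let j : α := G.snd e
    let w : α := vc.1.1
    let entry : ℝ × ℝ :=
      if i = j then
        (if w = i then p i + p i - PM.toPlane (m e) (p i) - PM.toPlane (m e)⁻¹ (p i) else 0)
      else if w = i then p i - PM.toPlane (m e) (p j)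
      else if w = j then p j - PM.toPlane (m e)⁻¹ (p i)
      else 0
    if vc.2 = 0 then entry.1 else entry.2

/-- A configuration is generic if its orbit rigidity matrix has the maximum
possible rank among all configurations. -/
def Generic [DecidableEq α] (G : Multigraph α β) (m : β → PM) (p : α → ℝ × ℝ) : Prop :=
  ∀ q : α → ℝ × ℝ, (orbitMatrix G m q).rank ≤ (orbitMatrix G m p).rank

/-- A gain graph is rigid if the orbit rigidity matrix of a generic configuration
has rank `2|V| - 1`. -/
def Rigid [DecidableEq α] (G : Multigraph α β) (m : β → PM) : Prop :=
  ∃ p : α → ℝ × ℝ, Generic G m p ∧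
    ((orbitMatrix G m p).rank : ℤ) = 2 * G.verts.card - 1

/-- A gain graph is independent if the rows of the orbit rigidity matrix of a
generic configuration are linearly independent. -/
def Independent [DecidableEq α] (G : Multigraph α β) (m : β → PM) : Prop :=
  ∃ p : α → ℝ × ℝ, Generic G m p ∧
    LinearIndependent ℝ (fun er => orbitMatrix G m p er)

/-- A gain graph is minimally rigid if it is rigid and independent. -/
def MinimallyRigid [DecidableEq α] (G : Multigraph α β) (m : β → PM) : Prop :=
  Rigid G m ∧ Independent G m

/-- `e` joins `u` and `v` (in one of the two orientations). -/
def Joins (G : Multigraph α β) (e : β) (u v : α) : Prop :=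
  (G.fst e = u ∧ G.snd e = v) ∨ (G.fst e = v ∧ G.snd e = u)

/-- The gain of an edge read with `v` as its initial vertex (inverting the gain
if the edge is oriented towards `v`). -/
def gainFrom [DecidableEq α] (G : Multigraph α β) (m : β → PM) (v : α) (e : β) : PM :=
  if G.fst e = v then m e else (m e)⁻¹

/-- The endpoint of an edge other than `v` (for an edge incident with `v`). -/
def otherEnd [DecidableEq α] (G : Multigraph α β) (v : α) (e : β) : α :=
  if G.fst e = v then G.snd e else G.fst e

/-- Deletion of a vertex together with all edges incident with it. -/
def Multigraph.deleteVertex [DecidableEq α] (G : Multigraph α β) (v : α) :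
    Multigraph α β where
  verts := G.verts.erase v
  edges := G.edges.filter fun e => G.fst e ≠ v ∧ G.snd e ≠ v
  fst := G.fst
  snd := G.snd
  fst_mem := fun e he => by
    rw [Finset.mem_filter] at he
    exact Finset.mem_erase.2 ⟨he.2.1, G.fst_mem e he.1⟩
  snd_mem := fun e he => by
    rw [Finset.mem_filter] at he
    exact Finset.mem_erase.2 ⟨he.2.2, G.snd_mem e he.1⟩

/-- Addition of a new edge `f` from `u` to `v`. -/
def Multigraph.addEdge [DecidableEq α] [DecidableEq β] (G : Multigraph α β)
    (f : β) (u v : α) : Multigraph α β where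
  verts := insert u (insert v G.verts)
  edges := insert f G.edges
  fst := Function.update G.fst f u
  snd := Function.update G.snd f v
  fst_mem := fun e he => by
    by_cases hef : e = f
    · subst hef; simp
    · rw [Function.update_of_ne hef]
      have heG : e ∈ G.edges := by
        rcases Finset.mem_insert.1 he with h | h
        · exact absurd h hef
        · exact h
      exact Finset.mem_insert_of_mem (Finset.mem_insert_of_mem (G.fst_mem e heG))
  snd_mem := fun e he => by
    by_cases hef : e = f
    · subst hef; simp
    · rw [Function.update_of_ne hef]
      have heG : e ∈ G.edges := by
        rcases Finset.mem_insert.1 he with h | h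
        · exact absurd h hef
        · exact h
      exact Finset.mem_insert_of_mem (Finset.mem_insert_of_mem (G.snd_mem e heG))

/-- `(G',m')` is obtained from `(G,m)` by a gained 0-extension. -/
def IsZeroExtension [DecidableEq α] [DecidableEq β] (G : Multigraph α β) (m : β → PM)
    (G' : Multigraph α β) (m' : β → PM) : Prop :=
  ∃ v₀ v₁ v₂ f₁ f₂, v₀ ∉ G.verts ∧ v₁ ∈ G.verts ∧ v₂ ∈ G.verts ∧
    f₁ ∉ G.edges ∧ f₂ ∉ G.edges ∧ f₁ ≠ f₂ ∧
    G'.verts = insert v₀ G.verts ∧ G'.edges = insert f₁ (insert f₂ G.edges) ∧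
    (∀ e ∈ G.edges, G'.fst e = G.fst e ∧ G'.snd e = G.snd e ∧ m' e = m e) ∧
    Joins G' f₁ v₀ v₁ ∧ Joins G' f₂ v₀ v₂ ∧
    IsGainGraph G' m'

/-- `(G',m')` is obtained from `(G,m)` by a gained 1-extension. -/
def IsOneExtension [DecidableEq α] [DecidableEq β] (G : Multigraph α β) (m : β → PM)
    (G' : Multigraph α β) (m' : β → PM) : Prop :=
  ∃ v₀ v₃ e f₁ f₂ f₃, v₀ ∉ G.verts ∧ v₃ ∈ G.verts ∧ e ∈ G.edges ∧
    f₁ ∉ G.edges.erase e ∧ f₂ ∉ G.edges.erase e ∧ f₃ ∉ G.edges.erase e ∧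
    f₁ ≠ f₂ ∧ f₁ ≠ f₃ ∧ f₂ ≠ f₃ ∧
    G'.verts = insert v₀ G.verts ∧
    G'.edges = insert f₁ (insert f₂ (insert f₃ (G.edges.erase e))) ∧
    (∀ e' ∈ G.edges.erase e, G'.fst e' = G.fst e' ∧ G'.snd e' = G.snd e' ∧ m' e' = m e') ∧
    Joins G' f₁ v₀ (G.fst e) ∧ Joins G' f₂ v₀ (G.snd e) ∧ Joins G' f₃ v₀ v₃ ∧
    (gainFrom G' m' v₀ f₁)⁻¹ * gainFrom G' m' v₀ f₂ = m e ∧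
    IsGainGraph G' m'

/-- `(G',m')` is obtained from `(G,m)` by a gained loop-1-extension. -/
def IsLoopOneExtension [DecidableEq α] [DecidableEq β] (G : Multigraph α β) (m : β → PM)
    (G' : Multigraph α β) (m' : β → PM) : Prop :=
  ∃ v₀ v₁ l f, v₀ ∉ G.verts ∧ v₁ ∈ G.verts ∧ l ∉ G.edges ∧ f ∉ G.edges ∧ l ≠ f ∧
    G'.verts = insert v₀ G.verts ∧ G'.edges = insert l (insert f G.edges) ∧
    (∀ e ∈ G.edges, G'.fst e = G.fst e ∧ G'.snd e = G.snd e ∧ m' e = m e) ∧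
    G'.fst l = v₀ ∧ G'.snd l = v₀ ∧ (m' l).r = true ∧
    Joins G' f v₀ v₁ ∧ IsGainGraph G' m'

/-- A `ℤ²⋊𝒞ₛ`-tight gain graph on `K₁¹`: a single vertex with a single loop whose
gain has non-trivial `𝒞ₛ`-component. -/
def IsTightK11 (G : Multigraph α β) (m : β → PM) : Prop :=
  ∃ v l, G.verts = {v} ∧ G.edges = {l} ∧ G.fst l = v ∧ G.snd l = v ∧ (m l).r = true

namespace PM

@[simp] lemma r_mul (a b : PM) : (a * b).r = xor a.r b.r := rfl
@[simp] lemma r_inv (a : PM) : a⁻¹.r = a.r := rfl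

@[simp] lemma toPlane_one (x : ℝ × ℝ) : toPlane 1 x = x := by
  simp [toPlane, one_def]

lemma toPlane_mul (a b : PM) (x : ℝ × ℝ) : toPlane (a * b) x = toPlane a (toPlane b x) := by
  obtain ⟨⟨a₁, a₂⟩, _ | _⟩ := a <;> obtain ⟨⟨b₁, b₂⟩, _ | _⟩ := b <;>
    ext <;> simp [toPlane, mul_def, act] <;> ring

@[simp] lemma toPlane_inv_toPlane (a : PM) (x : ℝ × ℝ) : toPlane a⁻¹ (toPlane a x) = x := by
  rw [← toPlane_mul, inv_mul_cancel, toPlane_one]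

end PM

lemma IsSubgraph.fst_eq {H G : Multigraph α β} (hHG : IsSubgraph H G) {e : β}
    (he : e ∈ H.edges) : H.fst e = G.fst e :=
  (hHG.2.2 e he).1

lemma IsSubgraph.snd_eq {H G : Multigraph α β} (hHG : IsSubgraph H G) {e : β}
    (he : e ∈ H.edges) : H.snd e = G.snd e :=
  (hHG.2.2 e he).2

lemma IsSubgraph.trans {K H G : Multigraph α β} (hKH : IsSubgraph K H) (hHG : IsSubgraph H G) :
    IsSubgraph K G :=
  ⟨hKH.1.trans hHG.1, hKH.2.1.trans hHG.2.1, fun _ he =>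
    ⟨(hKH.fst_eq he).trans (hHG.fst_eq (hKH.2.1 he)),
      (hKH.snd_eq he).trans (hHG.snd_eq (hKH.2.1 he))⟩⟩

def flipStep (s : β × Bool) : β × Bool := (s.1, !s.2)

lemma stepHead_flipStep (G : Multigraph α β) (s : β × Bool) :
    stepHead G (flipStep s) = stepTail G s := by
  obtain ⟨e, _ | _⟩ := s <;> rfl

lemma IsWalk.append {G : Multigraph α β} {u v w : α} {L L' : List (β × Bool)}
    (h : IsWalk G u v L) (h' : IsWalk G v w L') : IsWalk G u w (L ++ L') := by
  induction L generalizing u with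
  | nil => cases h; exact h'
  | cons s L ih => exact ⟨h.1, h.2.1, ih h.2.2⟩

lemma IsWalk.reverse {G : Multigraph α β} {u v : α} {L : List (β × Bool)}
    (h : IsWalk G u v L) : IsWalk G v u (L.reverse.map flipStep) := by
  induction L generalizing u with
  | nil => cases h; rfl
  | cons s L ih =>
    rw [List.reverse_cons, List.map_append]
    refine (ih h.2.2).append ⟨h.1, stepHead_flipStep G s, ?_⟩
    cases s with
    | mk e b => cases b <;> simpa [IsWalk, stepHead, stepTail, flipStep] using h.2.1

lemma IsWalk.mono {H G : Multigraph α β} (hHG : IsSubgraph H G) {u v : α}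
    {L : List (β × Bool)} (h : IsWalk H u v L) : IsWalk G u v L := by
  induction L generalizing u with
  | nil => exact h
  | cons s L ih =>
    obtain ⟨hs, rfl, hL⟩ := h
    have hhead : stepHead G s = stepHead H s := by
      simp [stepHead, hHG.fst_eq hs, hHG.snd_eq hs]
    have htail : stepTail G s = stepTail H s := by
      simp [stepTail, hHG.fst_eq hs, hHG.snd_eq hs]
    exact ⟨hHG.2.1 hs, hhead, htail ▸ ih hL⟩

lemma walkGain_append (m : β → PM) (L L' : List (β × Bool)) :
    walkGain m (L ++ L') = walkGain m L * walkGain m L' := by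
  simp [walkGain]

lemma walkGain_reverse (m : β → PM) (L : List (β × Bool)) :
    walkGain m (L.reverse.map flipStep) = (walkGain m L)⁻¹ := by
  induction L with
  | nil => simp [walkGain]
  | cons s L ih =>
    rw [List.reverse_cons, List.map_append, walkGain_append, ih]
    cases s with
    | mk e b => cases b <;> simp [walkGain, flipStep]

lemma Balanced.mono {H G : Multigraph α β} {m : β → PM} (hHG : IsSubgraph H G)
    (hG : Balanced G m) : Balanced H m :=
  fun u L hL => hG u L (hL.mono hHG)

lemma PurelyPeriodic.mono {H G : Multigraph α β} {m : β → PM} (hHG : IsSubgraph H G)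
    (hG : PurelyPeriodic G m) : PurelyPeriodic H m :=
  fun u L hL => hG u L (hL.mono hHG)

def reachSetoid (H : Multigraph α β) : Setoid α where
  r u v := ∃ L, IsWalk H u v L
  iseqv :=
    ⟨fun _ => ⟨[], rfl⟩, fun ⟨_, hL⟩ => ⟨_, hL.reverse⟩,
      fun ⟨_, hL⟩ ⟨_, hL'⟩ => ⟨_, hL.append hL'⟩⟩

noncomputable def componentBase (H : Multigraph α β) (v : α) : α :=
  (Quotient.mk (reachSetoid H) v).out

lemma componentBase_eq_of_isWalk {H : Multigraph α β} {u v : α} {L : List (β × Bool)}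
    (h : IsWalk H u v L) : componentBase H u = componentBase H v :=
  congrArg Quotient.out (Quotient.sound (s := reachSetoid H) ⟨L, h⟩)

noncomputable def componentBaseWalk (H : Multigraph α β) (v : α) : List (β × Bool) :=
  (Quotient.mk_out (s := reachSetoid H) v).choose

lemma isWalk_componentBaseWalk (H : Multigraph α β) (v : α) :
    IsWalk H (componentBase H v) v (componentBaseWalk H v) :=
  (Quotient.mk_out (s := reachSetoid H) v).choose_spec

noncomputable def potential (H : Multigraph α β) (m : β → PM) (v : α) : PM :=
  walkGain m (componentBaseWalk H v)

-- Out along the chosen walk to `fst e`, across `e`, and back along the reversed chosen walk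
-- to `snd e`.
lemma exists_closedWalk_gain_eq (H : Multigraph α β) (m : β → PM) {e : β} (he : e ∈ H.edges) :
    ∃ u L, IsWalk H u u L ∧
      walkGain m L = potential H m (H.fst e) * m e * (potential H m (H.snd e))⁻¹ := by
  have hstep : IsWalk H (H.fst e) (H.snd e) [(e, true)] := ⟨he, rfl, rfl⟩
  refine ⟨componentBase H (H.fst e), componentBaseWalk H (H.fst e) ++
    (e, true) :: (componentBaseWalk H (H.snd e)).reverse.map flipStep, ?_, ?_⟩
  · refine (isWalk_componentBaseWalk H _).append ⟨he, rfl, ?_⟩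
    rw [componentBase_eq_of_isWalk hstep]
    exact (isWalk_componentBaseWalk H _).reverse
  · rw [← List.singleton_append, walkGain_append, walkGain_append, walkGain_reverse, mul_assoc]
    simp [potential, walkGain]

lemma Balanced.gain_eq_potential {H : Multigraph α β} {m : β → PM} (hH : Balanced H m) {e : β}
    (he : e ∈ H.edges) :
    m e = (potential H m (H.fst e))⁻¹ * potential H m (H.snd e) := by
  obtain ⟨u, L, hL, hgain⟩ := exists_closedWalk_gain_eq H m he
  rw [hH u L hL, eq_comm, mul_inv_eq_one] at hgain
  rw [eq_inv_mul_iff_mul_eq, ← hgain]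

lemma PurelyPeriodic.r_gain_eq_potential {H : Multigraph α β} {m : β → PM}
    (hH : PurelyPeriodic H m) {e : β} (he : e ∈ H.edges) :
    (m e).r = xor (potential H m (H.fst e)).r (potential H m (H.snd e)).r := by
  obtain ⟨u, L, hL, hgain⟩ := exists_closedWalk_gain_eq H m he
  have hr := hH u L hL
  rw [hgain, PM.r_mul, PM.r_mul, PM.r_inv] at hr
  revert hr
  cases (potential H m (H.fst e)).r <;> cases (potential H m (H.snd e)).r <;> cases (m e).r <;>
    decide

def planeDot (a b : ℝ × ℝ) : ℝ := a.1 * b.1 + a.2 * b.2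

def motionVec (G : Multigraph α β) (Y : α → ℝ × ℝ) : {v // v ∈ G.verts} × Fin 2 → ℝ :=
  fun c => if c.2 = 0 then (Y c.1).1 else (Y c.1).2

/-- The linear part of an element of `pm` with `𝒞ₛ`-component `b`. -/
def reflectIf (b : Bool) (x : ℝ × ℝ) : ℝ × ℝ := (x.1, if b then -x.2 else x.2)

def twistedVertical (s : α → Bool) (v : α) : ℝ × ℝ := reflectIf (s v) (0, 1)

/-- The infinitesimal rotation about the origin of the lifted framework `v ↦ g v · q v`,
pulled back through the linear part of `g v`. -/
noncomputable def twistedRotation (g : α → PM) (q : α → ℝ × ℝ) (v : α) : ℝ × ℝ :=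
  reflectIf (g v).r (-((g v).toPlane (q v)).2, ((g v).toPlane (q v)).1)

section OrbitMatrix

variable [DecidableEq α] {G : Multigraph α β} {m : β → PM} {q : α → ℝ × ℝ}

lemma orbitMatrix_dotProduct_motionVec (e : {e // e ∈ G.edges}) (Y : α → ℝ × ℝ) :
    orbitMatrix G m q e ⬝ᵥ motionVec G Y =
      if G.fst e = G.snd e then
        planeDot (q (G.fst e) + q (G.fst e) - (m e).toPlane (q (G.fst e)) -
          (m e)⁻¹.toPlane (q (G.fst e))) (Y (G.fst e))
      else
        planeDot (q (G.fst e) - (m e).toPlane (q (G.snd e))) (Y (G.fst e)) +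
          planeDot (q (G.snd e) - (m e)⁻¹.toPlane (q (G.fst e))) (Y (G.snd e)) := by
  rw [dotProduct, Fintype.sum_prod_type]
  simp only [Fin.sum_univ_two, orbitMatrix, motionVec, Fin.isValue, if_true, one_ne_zero,
    if_false]
  split_ifs with hloop
  · rw [Fintype.sum_eq_single ⟨G.fst e, G.fst_mem _ e.2⟩ fun w hw => ?_]
    · simp [planeDot]
    · simp [Subtype.ext_iff.not.mp hw]
  · rw [Fintype.sum_eq_add ⟨G.fst e, G.fst_mem _ e.2⟩ ⟨G.snd e, G.snd_mem _ e.2⟩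
      (by simpa [Subtype.ext_iff] using hloop) fun w hw => ?_]
    · simp [planeDot, Ne.symm hloop]
    · simp [Subtype.ext_iff.not.mp hw.1, Subtype.ext_iff.not.mp hw.2]

lemma orbitMatrix_dotProduct_horizontal (e : {e // e ∈ G.edges}) :
    orbitMatrix G m q e ⬝ᵥ motionVec G (fun _ => (1, 0)) = 0 := by
  obtain ⟨⟨t₁, t₂⟩, _ | _⟩ := m e <;>
    rw [orbitMatrix_dotProduct_motionVec] <;> split_ifs <;>
    simp [planeDot, PM.toPlane, PM.inv_def, PM.act] <;> ring

lemma orbitMatrix_dotProduct_twistedVertical (e : {e // e ∈ G.edges}) {s : α → Bool}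
    (hs : (m e).r = xor (s (G.fst e)) (s (G.snd e))) :
    orbitMatrix G m q e ⬝ᵥ motionVec G (twistedVertical s) = 0 := by
  rw [orbitMatrix_dotProduct_motionVec]
  generalize m e = γ at hs ⊢
  obtain ⟨⟨t₁, t₂⟩, r⟩ := γ
  dsimp only at hs
  subst hs
  split_ifs with hloop
  · rw [← hloop, Bool.xor_self]
    simp [planeDot, PM.toPlane, PM.inv_def, PM.act]
    ring
  · simp only [twistedVertical, reflectIf]
    cases s (G.fst e) <;> cases s (G.snd e) <;>
      simp [planeDot, PM.toPlane, PM.inv_def, PM.act] <;> ring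

lemma orbitMatrix_dotProduct_twistedRotation (e : {e // e ∈ G.edges}) {g : α → PM}
    (hg : m e = (g (G.fst e))⁻¹ * g (G.snd e)) :
    orbitMatrix G m q e ⬝ᵥ motionVec G (twistedRotation g q) = 0 := by
  rw [orbitMatrix_dotProduct_motionVec, hg]
  split_ifs with hloop
  · simp [hloop, planeDot]
  · simp only [twistedRotation]
    obtain ⟨⟨a₁, a₂⟩, _ | _⟩ := g (G.fst e) <;> obtain ⟨⟨b₁, b₂⟩, _ | _⟩ := g (G.snd e) <;>
      simp [planeDot, reflectIf, PM.toPlane, PM.inv_def, PM.mul_def, PM.act] <;> ring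

lemma orbitMatrix_row_eq_zero (e : {e // e ∈ G.edges}) {g : α → PM}
    (hg : m e = (g (G.fst e))⁻¹ * g (G.snd e))
    (hq : (g (G.fst e)).toPlane (q (G.fst e)) = (g (G.snd e)).toPlane (q (G.snd e))) :
    orbitMatrix G m q e = 0 := by
  have h₁ : (m e).toPlane (q (G.snd e)) = q (G.fst e) := by
    rw [hg, PM.toPlane_mul, ← hq, PM.toPlane_inv_toPlane]
  have h₂ : (m e)⁻¹.toPlane (q (G.fst e)) = q (G.snd e) := by
    rw [← h₁, PM.toPlane_inv_toPlane]
  funext c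
  simp only [orbitMatrix]
  split_ifs <;> simp_all

end OrbitMatrix

lemma card_add_card_le_of_orthogonal {κ ι J : Type*} [Fintype κ] [Fintype ι] [Fintype J]
    {w : κ → J → ℝ} {y : ι → J → ℝ} (hw : LinearIndependent ℝ w)
    (hy : LinearIndependent ℝ y) (horth : ∀ k i, w k ⬝ᵥ y i = 0) :
    Fintype.card κ + Fintype.card ι ≤ Fintype.card J := by
  let T := (Matrix.of y).mulVecLin
  have hrange : Module.finrank ℝ (LinearMap.range T) = Fintype.card ι :=
    LinearIndependent.rank_matrix (M := Matrix.of y) hy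
  have hker : LinearIndependent ℝ fun k => (⟨w k, funext fun i => by
      simp [T, Matrix.mulVec, dotProduct_comm, horth]⟩ : LinearMap.ker T) :=
    .of_comp (LinearMap.ker T).subtype hw
  have := T.finrank_range_add_finrank_ker
  rw [hrange, Module.finrank_fintype_fun_eq_card] at this
  have := hker.fintype_card_le_finrank
  omega

lemma card_add_card_le_of_orthogonal_of_support {κ ι J : Type*} [Fintype κ] [Fintype ι]
    [Fintype J] {P : J → Prop} [DecidablePred P] {w : κ → J → ℝ} {y : ι → J → ℝ}
    (hw : LinearIndependent ℝ w) (hsupp : ∀ k c, ¬ P c → w k c = 0)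
    (hy : LinearIndependent ℝ fun i (c : {c // P c}) => y i c)
    (horth : ∀ k i, w k ⬝ᵥ y i = 0) :
    Fintype.card κ + Fintype.card ι ≤ Fintype.card {c // P c} := by
  refine card_add_card_le_of_orthogonal (w := fun k (c : {c // P c}) => w k c) ?_ hy
    fun k i => ?_
  · rw [Fintype.linearIndependent_iff] at hw ⊢
    intro a ha
    refine hw a (funext fun c => ?_)
    by_cases hc : P c
    · simpa using congrFun ha ⟨c, hc⟩
    · simp [Finset.sum_apply, hsupp _ c hc]
  · rw [← horth k i, dotProduct, dotProduct, ← Fintype.sum_subtype_add_sum_subtype P,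
      left_eq_add]
    exact Finset.sum_eq_zero fun c _ => by simp [hsupp k c c.2]

abbrev Columns (G H : Multigraph α β) : Type :=
  {c : {v // v ∈ G.verts} × Fin 2 // c.1.1 ∈ H.verts}

section Subgraph

variable [DecidableEq α] {G H : Multigraph α β} {m : β → PM} {q : α → ℝ × ℝ}

lemma card_columns_of_subset (hHG : H.verts ⊆ G.verts) :
    Fintype.card (Columns G H) = 2 * H.verts.card := by
  rw [Fintype.card_congr (Equiv.prodSubtypeFstEquivSubtypeProd
    (β := Fin 2) (p := fun v : {v // v ∈ G.verts} => v.1 ∈ H.verts)), Fintype.card_prod,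
    Fintype.card_congr (Equiv.subtypeSubtypeEquivSubtype fun hv => hHG hv), Fintype.card_coe,
    Fintype.card_fin, mul_comm]

lemma card_edges_add_le_of_motions (hHG : IsSubgraph H G)
    (hind : LinearIndependent ℝ (orbitMatrix G m q)) {ι : Type} [Fintype ι]
    (Y : ι → α → ℝ × ℝ)
    (hY : ∀ e (he : e ∈ H.edges) i, orbitMatrix G m q ⟨e, hHG.2.1 he⟩ ⬝ᵥ motionVec G (Y i) = 0)
    (hYind : LinearIndependent ℝ
      fun i (c : Columns G H) => motionVec G (Y i) c) :
    H.edges.card + Fintype.card ι ≤ 2 * H.verts.card := by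
  have hsupp : ∀ (e : {e // e ∈ H.edges}) (c : {v // v ∈ G.verts} × Fin 2),
      c.1.1 ∉ H.verts → orbitMatrix G m q ⟨e, hHG.2.1 e.2⟩ c = 0 := by
    intro e c hc
    have h₁ : c.1.1 ≠ G.fst e := fun h => hc (h ▸ hHG.fst_eq e.2 ▸ H.fst_mem e e.2)
    have h₂ : c.1.1 ≠ G.snd e := fun h => hc (h ▸ hHG.snd_eq e.2 ▸ H.snd_mem e e.2)
    simp [orbitMatrix, h₁, h₂]
  have hrows : LinearIndependent ℝ fun e : {e // e ∈ H.edges} =>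
      orbitMatrix G m q ⟨e, hHG.2.1 e.2⟩ :=
    hind.comp _ fun e f hef => Subtype.ext (congrArg Subtype.val hef :)
  have := card_add_card_le_of_orthogonal_of_support hrows hsupp hYind fun e i => hY e e.2 i
  rwa [Fintype.card_coe, card_columns_of_subset hHG.1] at this

end Subgraph

section Motions

variable {G H : Multigraph α β} {w : α}

lemma linearIndependent_horizontal (hHG : H.verts ⊆ G.verts) (hw : w ∈ H.verts) :
    LinearIndependent ℝ fun (_ : Fin 1) (c : Columns G H) =>
      motionVec G (fun _ => (1, 0)) c := by
  rw [linearIndependent_unique_iff]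
  intro h
  simpa [motionVec] using congrFun h ⟨(⟨w, hHG hw⟩, 0), hw⟩

lemma linearIndependent_horizontal_twistedVertical (hHG : H.verts ⊆ G.verts)
    (hw : w ∈ H.verts) (s : α → Bool) :
    LinearIndependent ℝ fun i (c : Columns G H) =>
      motionVec G (![fun _ => (1, 0), twistedVertical s] i) c := by
  rw [Fintype.linearIndependent_iff]
  intro a ha
  have h₀ := congrFun ha ⟨(⟨w, hHG hw⟩, 0), hw⟩
  have h₁ := congrFun ha ⟨(⟨w, hHG hw⟩, 1), hw⟩
  simp [Fin.sum_univ_two, motionVec, twistedVertical, reflectIf] at h₀ h₁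
  refine Fin.forall_fin_two.2 ⟨h₀, ?_⟩
  split_ifs at h₁ <;> linarith

lemma linearIndependent_horizontal_twistedVertical_twistedRotation (hHG : H.verts ⊆ G.verts)
    {g : α → PM} {q : α → ℝ × ℝ} {w₁ w₂ : α} (h₁ : w₁ ∈ H.verts) (h₂ : w₂ ∈ H.verts)
    (hne : (g w₁).toPlane (q w₁) ≠ (g w₂).toPlane (q w₂)) :
    LinearIndependent ℝ fun i (c : Columns G H) =>
      motionVec G (![fun _ => (1, 0), twistedVertical (fun v => (g v).r), twistedRotation g q] i)
        c := by
  rw [Fintype.linearIndependent_iff]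
  intro a ha
  have hcoord : ∀ w ∈ H.verts, a 0 = a 2 * ((g w).toPlane (q w)).2 ∧
      a 1 = -(a 2 * ((g w).toPlane (q w)).1) := by
    intro w hw
    have h₀ := congrFun ha ⟨(⟨w, hHG hw⟩, 0), hw⟩
    have h₁ := congrFun ha ⟨(⟨w, hHG hw⟩, 1), hw⟩
    simp [Fin.sum_univ_three, motionVec, twistedVertical, twistedRotation, reflectIf] at h₀ h₁
    constructor
    · linarith
    · split_ifs at h₁ <;> linarith
  obtain ⟨ha₀, ha₁⟩ := hcoord w₁ h₁
  obtain ⟨ha₀', ha₁'⟩ := hcoord w₂ h₂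
  have ha₂ : a 2 = 0 := by
    by_contra ha₂
    refine hne (Prod.ext ?_ ?_)
    · exact mul_left_cancel₀ ha₂ (neg_inj.1 (ha₁.symm.trans ha₁'))
    · exact mul_left_cancel₀ ha₂ (ha₀.symm.trans ha₀')
  refine Fin.forall_fin_succ.2 ⟨?_, Fin.forall_fin_two.2 ⟨?_, ha₂⟩⟩ <;> simp [ha₀, ha₁, ha₂]

end Motions

section Sparsity

variable [DecidableEq α] {G H : Multigraph α β} {m : β → PM} {q : α → ℝ × ℝ}

lemma sparse_two_one_of_linearIndependent (hind : LinearIndependent ℝ (orbitMatrix G m q)) :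
    Sparse 2 1 G := by
  intro H hHG hcard
  obtain ⟨e, he⟩ := Finset.card_pos.1 hcard
  have := card_edges_add_le_of_motions hHG hind (fun _ _ => (1, 0))
    (fun _ _ _ => orbitMatrix_dotProduct_horizontal _)
    (linearIndependent_horizontal hHG.1 (H.fst_mem e he))
  rw [Fintype.card_fin] at this
  omega

lemma PurelyPeriodic.sparse_two_two (hHG : IsSubgraph H G)
    (hind : LinearIndependent ℝ (orbitMatrix G m q)) (hH : PurelyPeriodic H m) :
    Sparse 2 2 H := by
  intro K hKH hcard
  have hKG := hKH.trans hHG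
  obtain ⟨e, he⟩ := Finset.card_pos.1 hcard
  have hmotion : ∀ f (hf : f ∈ K.edges) i, orbitMatrix G m q ⟨f, hKG.2.1 hf⟩ ⬝ᵥ
      motionVec G (![fun _ => (1, 0), twistedVertical fun v => (potential K m v).r] i) = 0 := by
    intro f hf
    refine Fin.forall_fin_two.2 ⟨orbitMatrix_dotProduct_horizontal _,
      orbitMatrix_dotProduct_twistedVertical _ ?_⟩
    rw [← hKG.fst_eq hf, ← hKG.snd_eq hf]
    exact (hH.mono hKH).r_gain_eq_potential hf
  have := card_edges_add_le_of_motions hKG hind _ hmotion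
    (linearIndependent_horizontal_twistedVertical hKG.1 (K.fst_mem e he) _)
  rw [Fintype.card_fin] at this
  omega

lemma Balanced.sparse_two_three (hHG : IsSubgraph H G)
    (hind : LinearIndependent ℝ (orbitMatrix G m q)) (hH : Balanced H m) :
    Sparse 2 3 H := by
  intro K hKH hcard
  have hKG := hKH.trans hHG
  obtain ⟨e, he⟩ := Finset.card_pos.1 hcard
  have hpot : ∀ f (hf : f ∈ K.edges),
      m f = (potential K m (G.fst f))⁻¹ * potential K m (G.snd f) := fun f hf => by
    rw [← hKG.fst_eq hf, ← hKG.snd_eq hf]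
    exact (hH.mono hKH).gain_eq_potential hf
  have hmotion : ∀ f (hf : f ∈ K.edges) i, orbitMatrix G m q ⟨f, hKG.2.1 hf⟩ ⬝ᵥ
      motionVec G (![fun _ => (1, 0), twistedVertical fun v => (potential K m v).r,
        twistedRotation (potential K m) q] i) = 0 := by
    intro f hf
    refine Fin.forall_fin_succ.2 ⟨orbitMatrix_dotProduct_horizontal _,
      Fin.forall_fin_two.2 ⟨orbitMatrix_dotProduct_twistedVertical _ ?_,
        orbitMatrix_dotProduct_twistedRotation _ (hpot f hf)⟩⟩
    simp [hpot f hf]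
  have hne : (potential K m (K.fst e)).toPlane (q (K.fst e)) ≠
      (potential K m (K.snd e)).toPlane (q (K.snd e)) := by
    rw [hKG.fst_eq he, hKG.snd_eq he]
    exact fun hq => hind.ne_zero _ (orbitMatrix_row_eq_zero ⟨e, hKG.2.1 he⟩ (hpot e he) hq)
  have := card_edges_add_le_of_motions hKG hind _ hmotion
    (linearIndependent_horizontal_twistedVertical_twistedRotation hKG.1 (K.fst_mem e he)
      (K.snd_mem e he) hne)
  rw [Fintype.card_fin] at this
  omega

end Sparsity

theorem tight_of_minimallyRigid_general {α β : Type} [DecidableEq α]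
    (G : Multigraph α β) (m : β → PM)
    (h : MinimallyRigid G m) : PMTight G m := by
  obtain ⟨⟨p₀, hp₀, hrank⟩, p, hp, hind⟩ := h
  have hcard : (G.edges.card : ℤ) = 2 * G.verts.card - 1 := by
    rw [← hrank, ← le_antisymm (hp₀ p) (hp p₀),
      LinearIndependent.rank_matrix (M := orbitMatrix G m p) hind, Fintype.card_coe]
  exact ⟨⟨sparse_two_one_of_linearIndependent hind, hcard⟩,
    fun H hHG hH => hH.sparse_two_two hHG hind, fun H hHG hH => hH.sparse_two_three hHG hind⟩

/-- Every minimally rigid `ℤ²⋊𝒞ₛ`-gain graph is `ℤ²⋊𝒞ₛ`-tight. -/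
theorem tight_of_minimallyRigid {α β : Type} [DecidableEq α]
    (G : Multigraph α β) (m : β → PM) (hGm : IsGainGraph G m)
    (h : MinimallyRigid G m) : PMTight G m :=
  tight_of_minimallyRigid_general G m h

end Crystal
end

section
/- Let (G,m) be a minimally rigid ℤ²⋊Cs-gain graph and let (G',m') be formed from (G,m) by a gained loop-1-extension. Then (G',m') is minimally rigid. -/
/-! Place the new vertex `v₀` so that the rows of the loop and of the new edge become pivots in
the two columns of `v₀`, where all old rows vanish: a loop whose gain has non-trivial reflection
component has row `(0, 4y - 2t₂)` at `v₀ = (x, y)`, so it is nonzero exactly in the `y`-column once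
`y ≠ t₂ / 2`, and the `x`-entry of the new edge row at `v₀` can be made nonzero by moving `x`.
The rows therefore stay independent, and two new rows for one new vertex keep the count
`|E| = 2|V| - 1`; independent rows with this count already give minimal rigidity, because a
configuration with independent rows has the maximum rank `|E|` and so is generic. -/

namespace Crystal

variable {α β : Type}

theorem _root_.LinearIndepOn.insert_of_map_ne_zero {K V ι : Type*} [DivisionRing K]
    [AddCommGroup V] [Module K V] {v : ι → V} {s : Set ι} {i : ι} (hs : LinearIndepOn K v s)
    (φ : V →ₗ[K] K) (hφs : ∀ j ∈ s, φ (v j) = 0) (hφi : φ (v i) ≠ 0) :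
    LinearIndepOn K v (insert i s) := by
  refine hs.insert fun hi => hφi ?_
  have hspan : Submodule.span K (v '' s) ≤ LinearMap.ker φ :=
    Submodule.span_le.2 <| by rintro _ ⟨j, hj, rfl⟩; exact hφs j hj
  exact hspan hi

theorem PM.toPlane_fst (g : PM) (x : ℝ × ℝ) : (g.toPlane x).1 = x.1 + g.t.1 := rfl

theorem PM.loop_row_eq (g : PM) (hg : g.r = true) (x : ℝ × ℝ) :
    x + x - g.toPlane x - g⁻¹.toPlane x = (0, 4 * x.2 - 2 * g.t.2) := by
  simp only [toPlane, inv_def, act, hg, if_true, Prod.ext_iff, Prod.fst_sub, Prod.fst_add,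
    Prod.snd_sub, Prod.snd_add, Prod.fst_neg, Prod.snd_neg, Int.cast_neg]
  constructor <;> ring

section OrbitMatrix

variable [DecidableEq α] {G G' : Multigraph α β} {m m' : β → PM} {p p' : α → ℝ × ℝ}

theorem orbitMatrix_apply_eq_zero {e : β} (he : e ∈ G.edges) {w : α} (hw : w ∈ G.verts)
    (hfst : w ≠ G.fst e) (hsnd : w ≠ G.snd e) (k : Fin 2) :
    orbitMatrix G m p ⟨e, he⟩ (⟨w, hw⟩, k) = 0 := by
  simp only [orbitMatrix, hfst, hsnd, if_false]
  split_ifs <;> rfl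

theorem orbitMatrix_loop_apply_zero {e : β} (he : e ∈ G.edges) {v : α} (hv : v ∈ G.verts)
    (hfst : G.fst e = v) (hsnd : G.snd e = v) (hr : (m e).r = true) :
    orbitMatrix G m p ⟨e, he⟩ (⟨v, hv⟩, 0) = 0 := by
  simp [orbitMatrix, hfst, hsnd, PM.loop_row_eq _ hr]

theorem orbitMatrix_loop_apply_one {e : β} (he : e ∈ G.edges) {v : α} (hv : v ∈ G.verts)
    (hfst : G.fst e = v) (hsnd : G.snd e = v) (hr : (m e).r = true) :
    orbitMatrix G m p ⟨e, he⟩ (⟨v, hv⟩, 1) = 4 * (p v).2 - 2 * (m e).t.2 := by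
  simp [orbitMatrix, hfst, hsnd, PM.loop_row_eq _ hr]

theorem orbitMatrix_apply_zero_of_joins {e : β} (he : e ∈ G.edges) {u v : α}
    (hv : v ∈ G.verts) (hj : Joins G e v u) (hne : v ≠ u) :
    orbitMatrix G m p ⟨e, he⟩ (⟨v, hv⟩, 0) = (p v).1 - (p u).1 - (gainFrom G m v e).t.1 := by
  rcases hj with ⟨hfst, hsnd⟩ | ⟨hfst, hsnd⟩
  · simp [orbitMatrix, gainFrom, hfst, hsnd, hne, PM.toPlane_fst, sub_add_eq_sub_sub]
  · simp [orbitMatrix, gainFrom, hfst, hsnd, hne, hne.symm, PM.toPlane_fst, sub_add_eq_sub_sub]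

theorem rank_orbitMatrix_of_linearIndependent (h : LinearIndependent ℝ (orbitMatrix G m p)) :
    (orbitMatrix G m p).rank = G.edges.card := by
  rw [LinearIndependent.rank_matrix (M := orbitMatrix G m p) h, Fintype.card_coe]

theorem generic_of_linearIndependent (h : LinearIndependent ℝ (orbitMatrix G m p)) :
    Generic G m p := fun q => by
  rw [rank_orbitMatrix_of_linearIndependent h, ← Fintype.card_coe G.edges]
  exact (orbitMatrix G m q).rank_le_card_height

theorem minimallyRigid_iff :
    MinimallyRigid G m ↔ (G.edges.card : ℤ) = 2 * G.verts.card - 1 ∧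
      ∃ p, LinearIndependent ℝ (orbitMatrix G m p) := by
  constructor
  · rintro ⟨⟨q, hq, hrank⟩, ⟨p, hp, hind⟩⟩
    have hpq : (orbitMatrix G m q).rank = (orbitMatrix G m p).rank :=
      le_antisymm (hp q) (hq p)
    rw [hpq, rank_orbitMatrix_of_linearIndependent hind] at hrank
    exact ⟨hrank, p, hind⟩
  · rintro ⟨hcard, p, hind⟩
    have hgen := generic_of_linearIndependent hind
    refine ⟨⟨p, hgen, ?_⟩, ⟨p, hgen, hind⟩⟩
    rw [rank_orbitMatrix_of_linearIndependent hind, hcard]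

theorem linearIndepOn_orbitMatrix_of_isSubgraph (hsub : IsSubgraph G G')
    (hm : ∀ e ∈ G.edges, m' e = m e) (hp : ∀ v ∈ G.verts, p' v = p v)
    (hind : LinearIndependent ℝ (orbitMatrix G m p)) :
    LinearIndepOn ℝ (orbitMatrix G' m' p') {e | e.1 ∈ G.edges} := by
  obtain ⟨hV, hE, hends⟩ := hsub
  let restrict : {v // v ∈ G.verts} × Fin 2 → {v // v ∈ G'.verts} × Fin 2 :=
    Prod.map (fun v => (⟨v.1, hV v.2⟩ : {v // v ∈ G'.verts})) id
  let toEdge (e : ({e | e.1 ∈ G.edges} : Set {e // e ∈ G'.edges})) : {e // e ∈ G.edges} :=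
    ⟨e.1.1, e.2⟩
  have hinj : Function.Injective toEdge := fun e f h => by
    simp only [toEdge, Subtype.mk.injEq] at h
    exact Subtype.ext (Subtype.ext h)
  refine LinearIndepOn.of_comp (LinearMap.funLeft ℝ ℝ restrict) ?_
  show LinearIndependent ℝ _
  convert hind.comp toEdge hinj using 1
  funext ⟨⟨e, he'⟩, he⟩ ⟨⟨w, hw⟩, k⟩
  obtain ⟨hfst, hsnd⟩ := hends e he
  show orbitMatrix G' m' p' ⟨e, he'⟩ (⟨w, hV hw⟩, k) = orbitMatrix G m p ⟨e, he⟩ (⟨w, hw⟩, k)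
  simp only [orbitMatrix, ← hfst, ← hsnd, hm e he, hp _ (G.fst_mem e he), hp _ (G.snd_mem e he)]

theorem orbitMatrix_apply_eq_zero_of_isSubgraph (hsub : IsSubgraph G G') {e : β}
    (he' : e ∈ G'.edges) (he : e ∈ G.edges) {v : α} (hv' : v ∈ G'.verts) (hv : v ∉ G.verts)
    (k : Fin 2) : orbitMatrix G' m p ⟨e, he'⟩ (⟨v, hv'⟩, k) = 0 := by
  obtain ⟨hfst, hsnd⟩ := hsub.2.2 e he
  refine orbitMatrix_apply_eq_zero he' hv' ?_ ?_ k
  · rw [← hfst]; rintro rfl; exact hv (G.fst_mem e he)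
  · rw [← hsnd]; rintro rfl; exact hv (G.snd_mem e he)

end OrbitMatrix

namespace IsLoopOneExtension

variable [DecidableEq α] [DecidableEq β] {G G' : Multigraph α β} {m m' : β → PM}

theorem card_verts (h : IsLoopOneExtension G m G' m') : G'.verts.card = G.verts.card + 1 := by
  obtain ⟨v₀, -, -, -, hv₀, -, -, -, -, hV, -⟩ := h
  rw [hV, Finset.card_insert_of_notMem hv₀]

theorem card_edges (h : IsLoopOneExtension G m G' m') : G'.edges.card = G.edges.card + 2 := by
  obtain ⟨-, -, l, f, -, -, hl, hf, hlf, -, hE, -⟩ := h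
  rw [hE, Finset.card_insert_of_notMem, Finset.card_insert_of_notMem hf]
  simp [hlf, hl]

theorem isSubgraph (h : IsLoopOneExtension G m G' m') : IsSubgraph G G' := by
  obtain ⟨_, _, _, _, -, -, -, -, -, hV, hE, hold, -⟩ := h
  refine ⟨hV ▸ Finset.subset_insert _ _, ?_, fun e he => ⟨(hold e he).1.symm, (hold e he).2.1.symm⟩⟩
  rw [hE]
  exact (Finset.subset_insert _ _).trans (Finset.subset_insert _ _)

theorem exists_linearIndependent (h : IsLoopOneExtension G m G' m') {p : α → ℝ × ℝ}
    (hp : LinearIndependent ℝ (orbitMatrix G m p)) :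
    ∃ p', LinearIndependent ℝ (orbitMatrix G' m' p') := by
  have hsub := h.isSubgraph
  obtain ⟨v₀, v₁, l, f, hv₀, hv₁, -, -, -, hV, hE, hold, hfstl, hsndl, hrl, hjf, -⟩ := h
  let p' := Function.update p v₀
    ((p v₁).1 + (gainFrom G' m' v₀ f).t.1 + 1, (m' l).t.2 / 2 + 1)
  have hp' : ∀ v ∈ G.verts, p' v = p v := fun v hv =>
    Function.update_of_ne (by rintro rfl; exact hv₀ hv) _ _
  have hv₀' : v₀ ∈ G'.verts := hV ▸ Finset.mem_insert_self _ _
  have hl' : l ∈ G'.edges := hE ▸ Finset.mem_insert_self _ _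
  have hf' : f ∈ G'.edges := hE ▸ Finset.mem_insert_of_mem (Finset.mem_insert_self _ _)
  let old : Set {e // e ∈ G'.edges} := {e | e.1 ∈ G.edges}
  let column (k : Fin 2) : ({v // v ∈ G'.verts} × Fin 2 → ℝ) →ₗ[ℝ] ℝ :=
    LinearMap.proj (⟨v₀, hv₀'⟩, k)
  have hold_zero : ∀ e ∈ old, ∀ k, orbitMatrix G' m' p' e (⟨v₀, hv₀'⟩, k) = 0 :=
    fun e he k => orbitMatrix_apply_eq_zero_of_isSubgraph hsub e.2 he hv₀' hv₀ k
  have hind_l : LinearIndepOn ℝ (orbitMatrix G' m' p') (insert ⟨l, hl'⟩ old) := by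
    refine (linearIndepOn_orbitMatrix_of_isSubgraph hsub (fun e he => (hold e he).2.2) hp' hp)
      |>.insert_of_map_ne_zero (column 1) (fun e he => hold_zero e he 1) ?_
    rw [LinearMap.proj_apply, orbitMatrix_loop_apply_one hl' hv₀' hfstl hsndl hrl]
    simp only [p', Function.update_self]
    ring_nf
    norm_num
  have hind_f : LinearIndepOn ℝ (orbitMatrix G' m' p')
      (insert ⟨f, hf'⟩ (insert ⟨l, hl'⟩ old)) := by
    refine hind_l.insert_of_map_ne_zero (column 0) ?_ ?_
    · rintro e (rfl | he)
      · exact orbitMatrix_loop_apply_zero hl' hv₀' hfstl hsndl hrl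
      · exact hold_zero e he 0
    have hv₀₁ : v₀ ≠ v₁ := by rintro rfl; exact hv₀ hv₁
    rw [LinearMap.proj_apply, orbitMatrix_apply_zero_of_joins hf' hv₀' hjf hv₀₁]
    simp only [p', Function.update_self, Function.update_of_ne hv₀₁.symm]
    ring_nf
    norm_num
  have hall : insert ⟨f, hf'⟩ (insert ⟨l, hl'⟩ old) = Set.univ := by
    ext ⟨e, he⟩
    rw [hE, Finset.mem_insert, Finset.mem_insert] at he
    simp only [Set.mem_insert_iff, Subtype.mk.injEq, Set.mem_univ, iff_true]
    tauto
  exact ⟨p', linearIndepOn_univ_iff.1 (hall ▸ hind_f)⟩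

end IsLoopOneExtension

theorem minimallyRigid_of_loopOneExtension_general {α β : Type} [DecidableEq α] [DecidableEq β]
    (G G' : Multigraph α β) (m m' : β → PM)
    (hMR : MinimallyRigid G m)
    (hext : IsLoopOneExtension G m G' m') :
    MinimallyRigid G' m' := by
  obtain ⟨hcard, p, hp⟩ := minimallyRigid_iff.1 hMR
  refine minimallyRigid_iff.2 ⟨?_, hext.exists_linearIndependent hp⟩
  rw [hext.card_edges, hext.card_verts]
  push_cast
  omega

/-- Gained loop-1-extensions preserve minimal rigidity. -/
theorem minimallyRigid_of_loopOneExtension {α β : Type} [DecidableEq α] [DecidableEq β]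
    (G G' : Multigraph α β) (m m' : β → PM)
    (hGm : IsGainGraph G m) (hMR : MinimallyRigid G m)
    (hext : IsLoopOneExtension G m G' m') :
    MinimallyRigid G' m' :=
  minimallyRigid_of_loopOneExtension_general G G' m m' hMR hext

end Crystal
end
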